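/- Let A ∈ (1,2] and λ ∈ (0,1]. Set r₁ = √((5 + λ − √((1−λ)(25−λ)))/(6λ)) and let φ(r) = −λ(9−A)r³ − λ(A+11)r² − (A+3)r + A − 1. Then φ(0) > 0 and φ(1) < 0, so φ has a least positive root r₂ in (0,1); and for every analytic function f on the open unit disc 𝔻 with f(0)=0, f'(0)=1, f''(0)=0 and |(z/f(z))²·f'(z) − 1| < λ for all z ∈ 𝔻, one has Re T_f(z) > 0 for all |z| < min{r₁, r₂}, where T_f(z) = (2/(A−1))·[((A+1)/2)·(1+z)/(1−z) − 1 − z f''(z)/f'(z)]. -/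

import Mathlib

/-!
Write `f z = z / g z`. Then `(z / f)² f' - 1 = g - z g' - 1 =: u`, which has a double zero at `0`
and modulus at most `λ`, so two applications of the Schwarz lemma give `u = z² ω` with `|ω| ≤ λ`.
Since `((g - 1) / z)' = -u / z² = -ω` and `g'(0) = -f''(0) / 2 = 0`, integration gives
`|g - 1| ≤ λ r²`, and the (weak) Schwarz–Pick inequality for `ω` gives `|z u'| ≤ 2 λ r²` for
`r ≤ 1 / 2`. From `z f'' / f' = z u' / (1 + u) + 2 (u - (g - 1)) / g` one gets
`|z f'' / f'| ≤ 6 λ r² / (1 - λ r²)`; together with `Re ((1 + z) / (1 - z)) ≥ (1 - r) / (1 + r)`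
this makes `Re T_f(z)` a positive multiple of `φ(r) / (2 (1 + r) (1 - λ r²))`, which is positive
below the least root `r₂` of `φ`. Positivity of `φ(r)` also forces `r < 1 / 2`.
-/

open Complex Metric Set

noncomputable def Tfun (A : ℝ) (f : ℂ → ℂ) (z : ℂ) : ℂ :=
  (2 / ((A : ℂ) - 1)) * ((((A : ℂ) + 1) / 2) * (1 + z) / (1 - z) - 1 -
    z * deriv (deriv f) z / deriv f z)

open ComplexConjugate Filter Topology

theorem mul_norm_sub_le_norm_sq_sub_conj_mul {lam : ℝ} (hlam : 0 ≤ lam) {b w : ℂ}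
    (hb : ‖b‖ ≤ lam) (hw : ‖w‖ ≤ lam) :
    lam * ‖w - b‖ ≤ ‖(lam : ℂ) ^ 2 - conj b * w‖ := by
  have key : ‖(lam : ℂ) ^ 2 - conj b * w‖ ^ 2 - (lam * ‖w - b‖) ^ 2
      = (lam ^ 2 - ‖b‖ ^ 2) * (lam ^ 2 - ‖w‖ ^ 2) := by
    simp only [mul_pow, Complex.sq_norm, Complex.normSq_apply, sub_re, sub_im, mul_re, mul_im,
      conj_re, conj_im, ← ofReal_pow, ofReal_re, ofReal_im]
    ring
  have hprod : 0 ≤ (lam ^ 2 - ‖b‖ ^ 2) * (lam ^ 2 - ‖w‖ ^ 2) :=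
    mul_nonneg (by nlinarith [norm_nonneg b]) (by nlinarith [norm_nonneg w])
  exact (sq_le_sq₀ (by positivity) (norm_nonneg _)).1 (by linarith)

theorem mul_norm_deriv_le_of_mapsTo_closedBall {ω : ℂ → ℂ} {lam : ℝ} (hlam : 0 < lam)
    (hd : DifferentiableOn ℂ ω (ball 0 1)) (h_maps : MapsTo ω (ball 0 1) (closedBall 0 lam))
    {z : ℂ} (hz : z ∈ ball 0 1) :
    lam * (1 - ‖z‖) * ‖deriv ω z‖ ≤ lam ^ 2 - ‖ω z‖ ^ 2 := by
  set a := ω z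
  have ha : ‖a‖ ≤ lam := mem_closedBall_zero_iff.1 (h_maps hz)
  rcases ha.eq_or_lt with ha | ha
  · -- `‖ω‖` attains its maximum at `z`, so `ω` is constant
    have hmax : IsMaxOn (norm ∘ ω) (ball 0 1) z := fun w hw => by
      simpa [a, ha] using mem_closedBall_zero_iff.1 (h_maps hw)
    have hconst : ω =ᶠ[𝓝 z] fun _ => a := eventuallyEq_of_mem (isOpen_ball.mem_nhds hz)
      (Complex.eqOn_of_isPreconnected_of_isMaxOn_norm (convex_ball 0 1).isPreconnected
        isOpen_ball hd hz hmax)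
    rw [hconst.deriv_eq, deriv_const, norm_zero, mul_zero, ha, sub_self]
  · have hR : 0 < 1 - ‖z‖ := sub_pos.2 (mem_ball_zero_iff.1 hz)
    have hsub : ball z (1 - ‖z‖) ⊆ ball 0 1 := ball_subset_ball' (by simp)
    have hden : ∀ w ∈ ball (0 : ℂ) 1, (lam : ℂ) ^ 2 - conj a * ω w ≠ 0 := by
      intro w hw h
      have hlt : ‖conj a * ω w‖ < lam ^ 2 := by
        rw [norm_mul, RCLike.norm_conj]
        nlinarith [norm_nonneg a, mem_closedBall_zero_iff.1 (h_maps hw)]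
      rw [← sub_eq_zero.1 h, norm_pow, norm_real, Real.norm_of_nonneg hlam.le] at hlt
      exact hlt.false
    -- the disc automorphism sending `a` to `0`
    set Φ : ℂ → ℂ := fun w => (lam : ℂ) ^ 2 * (ω w - a) / ((lam : ℂ) ^ 2 - conj a * ω w)
    have hΦd : DifferentiableOn ℂ Φ (ball 0 1) :=
      ((hd.sub_const a).const_mul _).div ((hd.const_mul _).const_sub _) hden
    have hΦ_maps : MapsTo Φ (ball z (1 - ‖z‖)) (closedBall (Φ z) lam) := by
      intro w hw
      rw [mem_closedBall, show Φ z = 0 by simp [Φ, a], dist_zero_right, norm_div, norm_mul,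
        div_le_iff₀ (norm_pos_iff.2 (hden w (hsub hw))), norm_pow, norm_real,
        Real.norm_of_nonneg hlam.le, sq, mul_assoc]
      exact mul_le_mul_of_nonneg_left (mul_norm_sub_le_norm_sq_sub_conj_mul hlam.le ha.le
        (mem_closedBall_zero_iff.1 (h_maps (hsub hw)))) hlam.le
    have hconj : (lam : ℂ) ^ 2 - conj a * a = ((lam ^ 2 - ‖a‖ ^ 2 : ℝ) : ℂ) := by
      rw [mul_comm, mul_conj, normSq_eq_norm_sq]; push_cast; ring
    have hpos : 0 < lam ^ 2 - ‖a‖ ^ 2 := by nlinarith [norm_nonneg a]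
    have hΦ' : HasDerivAt Φ ((lam : ℂ) ^ 2 * deriv ω z / ((lam ^ 2 - ‖a‖ ^ 2 : ℝ) : ℂ)) z := by
      have hω := (hd.differentiableAt (isOpen_ball.mem_nhds hz)).hasDerivAt
      refine (((hω.sub_const a).const_mul _).fun_div ((hω.const_mul (conj a)).const_sub _)
        (hden z hz)).congr_deriv ?_
      have h0 : (lam : ℂ) ^ 2 - conj a * a ≠ 0 := hden z hz
      rw [← hconj, sub_self, show ω z = a from rfl]
      field_simp
      ring
    have hschwarz := Complex.norm_deriv_le_div_of_mapsTo_ball (hΦd.mono hsub) hΦ_maps hR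
    rw [hΦ'.deriv, norm_div, norm_mul, norm_pow, norm_real, norm_real,
      Real.norm_of_nonneg hlam.le, Real.norm_of_nonneg hpos.le,
      div_le_div_iff₀ hpos hR] at hschwarz
    nlinarith

theorem exists_eq_sq_mul_of_mapsTo_closedBall {u : ℂ → ℂ} {lam : ℝ}
    (hd : DifferentiableOn ℂ u (ball 0 1)) (h₀ : u 0 = 0) (h₀' : deriv u 0 = 0)
    (h_maps : MapsTo u (ball 0 1) (closedBall 0 lam)) :
    ∃ ω : ℂ → ℂ, DifferentiableOn ℂ ω (ball 0 1) ∧ MapsTo ω (ball 0 1) (closedBall 0 lam) ∧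
      u = fun z => z ^ 2 * ω z := by
  have h0 : ball (0 : ℂ) 1 ∈ 𝓝 0 := ball_mem_nhds 0 one_pos
  have hv : DifferentiableOn ℂ (dslope u 0) (ball 0 1) := (differentiableOn_dslope h0).2 hd
  have hv_maps : MapsTo (dslope u 0) (ball 0 1) (closedBall 0 lam) := fun z hz => by
    simpa using norm_dslope_le_div_of_mapsTo_ball hd (by rwa [h₀]) hz
  refine ⟨dslope (dslope u 0) 0, (differentiableOn_dslope h0).2 hv, fun z hz => ?_,
    funext fun z => ?_⟩
  · simpa using norm_dslope_le_div_of_mapsTo_ball hv (by rwa [dslope_same, h₀']) hz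
  · have h1 := sub_smul_dslope u 0 z
    have h2 := sub_smul_dslope (dslope u 0) 0 z
    rw [dslope_same, h₀'] at h2
    simp only [sub_zero, smul_eq_mul, h₀] at h1 h2
    rw [← h1, ← h2]
    ring

theorem norm_mul_deriv_sq_mul_le {ω : ℂ → ℂ} {lam : ℝ} (hlam : 0 < lam)
    (hd : DifferentiableOn ℂ ω (ball 0 1)) (h_maps : MapsTo ω (ball 0 1) (closedBall 0 lam))
    {z : ℂ} (hz : ‖z‖ ≤ 1 / 2) :
    ‖z * deriv (fun w => w ^ 2 * ω w) z‖ ≤ 2 * lam * ‖z‖ ^ 2 := by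
  have hz1 : z ∈ ball (0 : ℂ) 1 := mem_ball_zero_iff.2 (by linarith)
  have hderiv : z * deriv (fun w => w ^ 2 * ω w) z = 2 * z ^ 2 * ω z + z ^ 3 * deriv ω z := by
    rw [((hasDerivAt_pow 2 z).fun_mul
      (hd.differentiableAt (isOpen_ball.mem_nhds hz1)).hasDerivAt).deriv]
    push_cast
    ring
  have hm : ‖ω z‖ ≤ lam := mem_closedBall_zero_iff.1 (h_maps hz1)
  have hpick := mul_norm_deriv_le_of_mapsTo_closedBall hlam hd h_maps hz1
  set r := ‖z‖
  set m := ‖ω z‖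
  set d := ‖deriv ω z‖
  -- `λ (1 - r) r³ d ≤ r³ (λ² - m²)` by `hpick`, and `r (λ + m) ≤ 2 λ r ≤ 2 λ (1 - r)`
  have hcubic : lam * (1 - r) * (r ^ 3 * d) ≤ lam * (1 - r) * (2 * r ^ 2 * (lam - m)) := by
    have hr : 0 ≤ r := norm_nonneg z
    nlinarith [mul_nonneg (mul_nonneg (sq_nonneg r) (sub_nonneg.2 hm))
      (by nlinarith [norm_nonneg (ω z)] : 0 ≤ 2 * lam * (1 - r) - r * (lam + m)), pow_nonneg hr 3]
  have hd_le := le_of_mul_le_mul_left hcubic (mul_pos hlam (by linarith))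
  calc ‖z * deriv (fun w => w ^ 2 * ω w) z‖ ≤ 2 * r ^ 2 * m + r ^ 3 * d := by
        rw [hderiv]
        refine (norm_add_le _ _).trans_eq ?_
        simp [r, m, d]
    _ ≤ 2 * lam * r ^ 2 := by linarith

theorem norm_div_one_add_add_two_mul_div_le {a u h : ℂ} {ε : ℝ} (hε : ε < 1)
    (ha : ‖a‖ ≤ 2 * ε) (hu : ‖u‖ ≤ ε) (hh : ‖h‖ ≤ ε) :
    ‖a / (1 + u) + 2 * (u - h) / (1 + h)‖ ≤ 6 * ε / (1 - ε) := by
  have hlow : ∀ v : ℂ, ‖v‖ ≤ ε → 1 - ε ≤ ‖1 + v‖ := fun v hv => by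
    have := norm_sub_norm_le (1 : ℂ) (-v)
    rw [norm_one, norm_neg, sub_neg_eq_add] at this
    linarith
  have hpos : 0 < 1 - ε := by linarith
  have hε₀ : 0 ≤ ε := (norm_nonneg u).trans hu
  calc ‖a / (1 + u) + 2 * (u - h) / (1 + h)‖
      ≤ ‖a‖ / ‖1 + u‖ + 2 * (‖u‖ + ‖h‖) / ‖1 + h‖ := by
        refine (norm_add_le _ _).trans ?_
        rw [norm_div, norm_div, norm_mul, Complex.norm_two]
        gcongr
        exact norm_sub_le _ _
    _ ≤ 2 * ε / (1 - ε) + 2 * (ε + ε) / (1 - ε) := by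
        gcongr
        exacts [hlow u hu, hlow h hh]
    _ = 6 * ε / (1 - ε) := by ring

/-- For `f z = z / g z` this is `(z / f z) ^ 2 * f' z - 1`, the quantity bounded by `λ` in
`𝒰(λ)`. -/
noncomputable def uDefect (g : ℂ → ℂ) (z : ℂ) : ℂ := g z - z * deriv g z - 1

section uDefect

variable {g : ℂ → ℂ} {U : Set ℂ} {z : ℂ}

theorem hasDerivAt_id_div (hg : DifferentiableAt ℂ g z) (hz : g z ≠ 0) :
    HasDerivAt (fun w => w / g w) ((1 + uDefect g z) / g z ^ 2) z :=
  ((hasDerivAt_id z).fun_div hg.hasDerivAt hz).congr_deriv (by simp [uDefect])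

theorem hasDerivAt_uDefect (hU : IsOpen U) (hg : DifferentiableOn ℂ g U) (hz : z ∈ U) :
    HasDerivAt (uDefect g) (-(z * deriv (deriv g) z)) z := by
  have hg' := (hg.analyticOnNhd hU).deriv.differentiableOn.differentiableAt (hU.mem_nhds hz)
  exact ((((hg.differentiableAt (hU.mem_nhds hz)).hasDerivAt.sub
    ((hasDerivAt_id z).mul hg'.hasDerivAt)).sub_const 1)).congr_deriv (by simp)

theorem deriv_deriv_id_div (hU : IsOpen U) (hg : DifferentiableOn ℂ g U)
    (hg₀ : ∀ w ∈ U, g w ≠ 0) (hz : z ∈ U) :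
    deriv (deriv fun w => w / g w) z
      = (deriv (uDefect g) z * g z - 2 * (1 + uDefect g z) * deriv g z) / g z ^ 3 := by
  have hgz := hg.differentiableAt (hU.mem_nhds hz)
  have heq : deriv (fun w => w / g w) =ᶠ[𝓝 z] fun w => (1 + uDefect g w) / g w ^ 2 :=
    eventuallyEq_of_mem (hU.mem_nhds hz) fun w hw =>
      (hasDerivAt_id_div (hg.differentiableAt (hU.mem_nhds hw)) (hg₀ w hw)).deriv
  have hu := hasDerivAt_uDefect hU hg hz
  rw [heq.deriv_eq, ((hu.const_add 1).fun_div (hgz.hasDerivAt.fun_pow 2)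
    (pow_ne_zero 2 (hg₀ z hz))).deriv, hu.deriv]
  have := hg₀ z hz
  field_simp
  ring

theorem norm_sub_one_le_of_uDefect_eq {ω : ℂ → ℂ} {lam : ℝ}
    (hg : DifferentiableOn ℂ g (ball 0 1)) (hg₁ : g 0 = 1) (hg₁' : deriv g 0 = 0)
    (hω : DifferentiableOn ℂ ω (ball 0 1)) (hω_maps : MapsTo ω (ball 0 1) (closedBall 0 lam))
    (hu : uDefect g = fun w => w ^ 2 * ω w) (hz : z ∈ ball 0 1) :
    ‖g z - 1‖ ≤ lam * ‖z‖ ^ 2 := by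
  set W := dslope g 0
  have hW : DifferentiableOn ℂ W (ball 0 1) :=
    (differentiableOn_dslope (ball_mem_nhds 0 one_pos)).2 hg
  have hgW : g = fun w => 1 + w * W w := funext fun w => by
    have := sub_smul_dslope g 0 w
    rw [sub_zero, smul_eq_mul, hg₁] at this
    rw [this]
    ring
  have hW₀ : W 0 = 0 := by rw [show W 0 = deriv g 0 from dslope_same g 0, hg₁']
  -- differentiating `g = 1 + z W` gives `uDefect g = - z ^ 2 W'`
  have hW' : ∀ w ∈ ball (0 : ℂ) 1, w ≠ 0 → deriv W w = -ω w := by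
    intro w hw hw0
    have hgw : deriv g w = W w + w * deriv W w := by
      rw [hgW]
      exact (((hasDerivAt_id w).fun_mul
        (hW.differentiableAt (isOpen_ball.mem_nhds hw)).hasDerivAt).const_add 1).deriv.trans
        (by simp)
    have h := congrFun hu w
    rw [uDefect, hgw, hgW] at h
    have : w ^ 2 * (deriv W w + ω w) = 0 := by linear_combination -h
    simpa [hw0, add_eq_zero_iff_eq_neg] using this
  have hW'_eqOn : EqOn (deriv W) (fun w => -ω w) (ball 0 1) := by
    refine (hW.analyticOnNhd isOpen_ball).deriv.eqOn_of_preconnected_of_frequently_eq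
      (hω.analyticOnNhd isOpen_ball).neg (convex_ball 0 1).isPreconnected
      (mem_ball_self one_pos) (Eventually.frequently ?_)
    filter_upwards [self_mem_nhdsWithin,
      mem_nhdsWithin_of_mem_nhds (ball_mem_nhds (0 : ℂ) one_pos)] with w hw0 hw
    exact hW' w hw hw0
  have hmvt := (convex_ball (0 : ℂ) 1).norm_image_sub_le_of_norm_deriv_le
    (fun w hw => hW.differentiableAt (isOpen_ball.mem_nhds hw))
    (fun w hw => by rw [hW'_eqOn hw, norm_neg]; exact mem_closedBall_zero_iff.1 (hω_maps hw))
    (mem_ball_self one_pos) hz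
  rw [hW₀, sub_zero, sub_zero] at hmvt
  rw [hgW, add_sub_cancel_left, norm_mul]
  nlinarith [norm_nonneg z]

theorem norm_mul_deriv_deriv_div_deriv_id_div_le {lam : ℝ} (hlam : 0 < lam) (hlam₁ : lam ≤ 1)
    (hg : DifferentiableOn ℂ g (ball 0 1)) (hg₀ : ∀ w ∈ ball (0 : ℂ) 1, g w ≠ 0)
    (hg₁ : g 0 = 1) (hg₁' : deriv g 0 = 0)
    (h_maps : MapsTo (uDefect g) (ball 0 1) (closedBall 0 lam)) (hz : ‖z‖ ≤ 1 / 2) :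
    ‖z * deriv (deriv fun w => w / g w) z / deriv (fun w => w / g w) z‖
      ≤ 6 * lam * ‖z‖ ^ 2 / (1 - lam * ‖z‖ ^ 2) := by
  have hz1 : z ∈ ball (0 : ℂ) 1 := mem_ball_zero_iff.2 (by linarith)
  have hu₀ : uDefect g 0 = 0 := by simp [uDefect, hg₁]
  have hu₀' : deriv (uDefect g) 0 = 0 := by
    simp [(hasDerivAt_uDefect isOpen_ball hg (mem_ball_self one_pos)).deriv]
  obtain ⟨ω, hω, hω_maps, huω⟩ := exists_eq_sq_mul_of_mapsTo_closedBall
    (fun w hw => (hasDerivAt_uDefect isOpen_ball hg hw).differentiableAt.differentiableWithinAt)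
    hu₀ hu₀' h_maps
  have hε : lam * ‖z‖ ^ 2 < 1 := by nlinarith [norm_nonneg z]
  have hu_le : ‖uDefect g z‖ ≤ lam * ‖z‖ ^ 2 := by
    rw [huω, norm_mul, norm_pow]
    nlinarith [mem_closedBall_zero_iff.1 (hω_maps hz1), norm_nonneg z]
  have hdu_le : ‖z * deriv (uDefect g) z‖ ≤ 2 * (lam * ‖z‖ ^ 2) := by
    rw [huω]
    exact (norm_mul_deriv_sq_mul_le hlam hω hω_maps hz).trans_eq (by ring)
  have hg_le := norm_sub_one_le_of_uDefect_eq hg hg₁ hg₁' hω hω_maps huω hz1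
  have hu₁ : 1 + uDefect g z ≠ 0 := fun h => by
    rw [← neg_eq_of_add_eq_zero_right h, norm_neg, norm_one] at hu_le
    linarith
  have hgz := hg₀ z hz1
  have hzg' : z * deriv g z = g z - 1 - uDefect g z := by rw [uDefect]; ring
  have hkey : z * deriv (deriv fun w => w / g w) z / deriv (fun w => w / g w) z
      = z * deriv (uDefect g) z / (1 + uDefect g z)
        + 2 * (uDefect g z - (g z - 1)) / (1 + (g z - 1)) := by
    rw [deriv_deriv_id_div isOpen_ball hg hg₀ hz1,
      (hasDerivAt_id_div (hg.differentiableAt (isOpen_ball.mem_nhds hz1)) hgz).deriv,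
      add_sub_cancel]
    field_simp
    linear_combination (-2 * (1 + uDefect g z)) * hzg'
  rw [hkey]
  exact (norm_div_one_add_add_two_mul_div_le hε hdu_le hu_le hg_le).trans_eq (by ring)

end uDefect

theorem exists_eqOn_id_div {f : ℂ → ℂ} {lam : ℝ} (hlam : lam ≤ 1)
    (hf : DifferentiableOn ℂ f (ball 0 1)) (hf₀ : f 0 = 0) (hf₁ : deriv f 0 = 1)
    (hU : ∀ z ∈ ball (0 : ℂ) 1, z ≠ 0 → ‖(z / f z) ^ 2 * deriv f z - 1‖ < lam) :
    ∃ g : ℂ → ℂ, DifferentiableOn ℂ g (ball 0 1) ∧ (∀ w ∈ ball (0 : ℂ) 1, g w ≠ 0) ∧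
      g 0 = 1 ∧ EqOn f (fun w => w / g w) (ball 0 1) := by
  set F := dslope f 0
  have hfF : ∀ w, f w = w * F w := fun w => by
    simpa [hf₀] using (sub_smul_dslope f 0 w).symm
  have hF₀ : F 0 = 1 := by rw [show F 0 = deriv f 0 from dslope_same f 0, hf₁]
  -- a zero of `f` off the origin would make the left side of `hU` equal to `‖-1‖` (as `x / 0 = 0`)
  have hF : ∀ w ∈ ball (0 : ℂ) 1, F w ≠ 0 := by
    intro w hw hFw
    rcases eq_or_ne w 0 with rfl | hw0
    · simp [hF₀] at hFw
    · have := hU w hw hw0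
      rw [hfF w, hFw, mul_zero, div_zero] at this
      norm_num at this
      linarith
  exact ⟨fun w => (F w)⁻¹, ((differentiableOn_dslope (ball_mem_nhds 0 one_pos)).2 hf).inv hF,
    fun w hw => inv_ne_zero (hF w hw), by simp [hF₀], fun w _ => by simp [hfF w]⟩

theorem norm_mul_deriv_deriv_div_deriv_le {f : ℂ → ℂ} {lam : ℝ} (hlam : 0 < lam) (hlam₁ : lam ≤ 1)
    (hf : DifferentiableOn ℂ f (ball 0 1)) (hf₀ : f 0 = 0) (hf₁ : deriv f 0 = 1)
    (hf₂ : deriv (deriv f) 0 = 0)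
    (hU : ∀ z ∈ ball (0 : ℂ) 1, z ≠ 0 → ‖(z / f z) ^ 2 * deriv f z - 1‖ < lam)
    {z : ℂ} (hz : ‖z‖ ≤ 1 / 2) :
    ‖z * deriv (deriv f) z / deriv f z‖ ≤ 6 * lam * ‖z‖ ^ 2 / (1 - lam * ‖z‖ ^ 2) := by
  obtain ⟨g, hg, hg₀, hg₁, hfg⟩ := exists_eqOn_id_div hlam₁ hf hf₀ hf₁ hU
  have h0 : (0 : ℂ) ∈ ball (0 : ℂ) 1 := mem_ball_self one_pos
  have hf' := hfg.deriv isOpen_ball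
  have hf'' := hf'.deriv isOpen_ball
  have hu₀ : uDefect g 0 = 0 := by simp [uDefect, hg₁]
  -- `f''(0) = -2 g'(0)`
  have hg₁' : deriv g 0 = 0 := by
    have := hf'' h0
    rw [hf₂, deriv_deriv_id_div isOpen_ball hg hg₀ h0,
      (hasDerivAt_uDefect isOpen_ball hg h0).deriv, hu₀, hg₁] at this
    linear_combination this / 2
  have h_maps : MapsTo (uDefect g) (ball 0 1) (closedBall 0 lam) := by
    intro w hw
    rw [mem_closedBall_zero_iff]
    rcases eq_or_ne w 0 with rfl | hw0
    · rw [hu₀, norm_zero]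
      exact hlam.le
    · have hgw := hg₀ w hw
      have := hU w hw hw0
      rw [hfg hw, hf' hw,
        (hasDerivAt_id_div (hg.differentiableAt (isOpen_ball.mem_nhds hw)) hgw).deriv] at this
      beta_reduce at this
      rw [show (w / (w / g w)) ^ 2 * ((1 + uDefect g w) / g w ^ 2) - 1 = uDefect g w by
        field_simp; ring] at this
      exact this.le
  rw [hf'' (mem_ball_zero_iff.2 (by linarith)), hf' (mem_ball_zero_iff.2 (by linarith))]
  exact norm_mul_deriv_deriv_div_deriv_id_div_le hlam hlam₁ hg hg₀ hg₁ hg₁' h_maps hz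

theorem div_le_re_one_add_div_one_sub {z : ℂ} (hz : ‖z‖ < 1) :
    (1 - ‖z‖) / (1 + ‖z‖) ≤ ((1 + z) / (1 - z)).re := by
  have hz1 : 1 - z ≠ 0 := fun h => by simp [← sub_eq_zero.1 h] at hz
  have hre : ((1 + z) / (1 - z)).re = (1 - ‖z‖ ^ 2) / ‖1 - z‖ ^ 2 := by
    rw [div_re, ← add_div, Complex.sq_norm, Complex.sq_norm]
    simp only [normSq_apply, add_re, add_im, sub_re, sub_im, one_re, one_im]
    ring
  have hle : ‖1 - z‖ ≤ 1 + ‖z‖ := (norm_sub_le _ _).trans_eq (by rw [norm_one])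
  rw [hre, show (1 - ‖z‖) / (1 + ‖z‖) = (1 - ‖z‖ ^ 2) / (1 + ‖z‖) ^ 2 by
    field_simp; ring]
  have hr := norm_nonneg z
  gcongr
  nlinarith

theorem re_Tfun_pos {A B : ℝ} (hA : 1 < A) {f : ℂ → ℂ} {z : ℂ} (hz : ‖z‖ < 1)
    (hB : ‖z * deriv (deriv f) z / deriv f z‖ ≤ B)
    (hlt : B < (A + 1) / 2 * ((1 - ‖z‖) / (1 + ‖z‖)) - 1) : 0 < (Tfun A f z).re := by
  have hT : Tfun A f z = ((2 / (A - 1) : ℝ) : ℂ) * ((((A + 1) / 2 : ℝ) : ℂ) * ((1 + z) / (1 - z))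
      - 1 - z * deriv (deriv f) z / deriv f z) := by
    rw [Tfun]; push_cast; ring
  rw [hT, re_ofReal_mul, sub_re, sub_re, re_ofReal_mul, one_re]
  refine mul_pos (div_pos two_pos (sub_pos.2 hA)) ?_
  have hre := (re_le_norm _).trans hB
  have := mul_le_mul_of_nonneg_left (div_le_re_one_add_div_one_sub hz)
    (by linarith : 0 ≤ (A + 1) / 2)
  linarith

theorem lt_half_of_cubic_pos {A lam r : ℝ} (hA₁ : 1 < A) (hA₂ : A ≤ 2) (hlam : 0 ≤ lam) (hr : 0 ≤ r)
    (h : 0 < -lam * (9 - A) * r ^ 3 - lam * (A + 11) * r ^ 2 - (A + 3) * r + A - 1) :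
    r < 1 / 2 := by
  nlinarith [mul_nonneg (mul_nonneg hlam (by linarith : (0 : ℝ) ≤ 9 - A)) (pow_nonneg hr 3),
    mul_nonneg (mul_nonneg hlam (by linarith : (0 : ℝ) ≤ A + 11)) (pow_nonneg hr 2)]

theorem six_mul_div_lt_of_cubic_pos {A lam r : ℝ} (hlam : lam * r ^ 2 < 1) (hr : 0 ≤ r)
    (h : 0 < -lam * (9 - A) * r ^ 3 - lam * (A + 11) * r ^ 2 - (A + 3) * r + A - 1) :
    6 * lam * r ^ 2 / (1 - lam * r ^ 2) < (A + 1) / 2 * ((1 - r) / (1 + r)) - 1 := by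
  rw [div_lt_iff₀ (by linarith), ← sub_pos]
  have key : ((A + 1) / 2 * ((1 - r) / (1 + r)) - 1) * (1 - lam * r ^ 2) - 6 * lam * r ^ 2
      = (-lam * (9 - A) * r ^ 3 - lam * (A + 11) * r ^ 2 - (A + 3) * r + A - 1)
        / (2 * (1 + r)) := by
    field_simp
    ring
  rw [key]
  positivity

theorem exists_isLeast_zero_of_continuousOn {φ : ℝ → ℝ} {a b : ℝ} (hab : a ≤ b)
    (hφ : ContinuousOn φ (Icc a b)) (ha : 0 < φ a) (hb : φ b < 0) :
    ∃ c, IsLeast {r | r ∈ Ioo a b ∧ φ r = 0} c ∧ ∀ r ∈ Ico a c, 0 < φ r := by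
  have hK : IsCompact (Icc a b ∩ φ ⁻¹' {0}) := isCompact_Icc.of_isClosed_subset
    (hφ.preimage_isClosed_of_isClosed isClosed_Icc isClosed_singleton) inter_subset_left
  obtain ⟨c, ⟨hcI, hc₀⟩, hc⟩ := hK.exists_isLeast
    (intermediate_value_Icc' hab hφ ⟨hb.le, ha.le⟩)
  have hpos : ∀ r ∈ Ico a c, 0 < φ r := by
    intro r hr
    by_contra! h
    have hrb : r ≤ b := hr.2.le.trans hcI.2
    obtain ⟨s, hs, hs₀⟩ := intermediate_value_Icc' hr.1
      (hφ.mono (Icc_subset_Icc le_rfl hrb)) ⟨h, ha.le⟩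
    exact (hc ⟨⟨hs.1, hs.2.trans hrb⟩, hs₀⟩).not_gt (hs.2.trans_lt hr.2)
  refine ⟨c, ⟨⟨⟨hcI.1.lt_of_ne ?_, hcI.2.lt_of_ne ?_⟩, hc₀⟩,
    fun r hr => hc ⟨Ioo_subset_Icc_self hr.1, hr.2⟩⟩, hpos⟩
  · rintro rfl
    exact ha.ne' hc₀
  · rintro rfl
    exact hb.ne hc₀

theorem radius_of_concavity_U0_general
    (A : ℝ) (hA : A ∈ Set.Ioc (1 : ℝ) 2) (lam : ℝ) (hlam : lam ∈ Set.Ioc (0 : ℝ) 1)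
    (r₁ : ℝ)
    (φ : ℝ → ℝ)
    (hφ : ∀ r : ℝ, φ r =
      -lam * (9 - A) * r ^ 3 - lam * (A + 11) * r ^ 2 - (A + 3) * r + A - 1) :
    0 < φ 0 ∧ φ 1 < 0 ∧
    ∃ r₂ : ℝ, IsLeast {r : ℝ | r ∈ Set.Ioo (0 : ℝ) 1 ∧ φ r = 0} r₂ ∧
      ∀ f : ℂ → ℂ, AnalyticOn ℂ f (ball (0 : ℂ) 1) →
        f 0 = 0 → deriv f 0 = 1 → deriv (deriv f) 0 = 0 →
        (∀ z ∈ ball (0 : ℂ) 1, z ≠ 0 →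
          ‖(z / f z) ^ 2 * deriv f z - 1‖ < lam) →
        ∀ z : ℂ, ‖z‖ < min r₁ r₂ → 0 < (Tfun A f z).re := by
  obtain ⟨hA₁, hA₂⟩ := hA
  obtain ⟨hlam₀, hlam₁⟩ := hlam
  have hφ₀ : 0 < φ 0 := by rw [hφ]; linarith
  have hφ₁ : φ 1 < 0 := by rw [hφ]; nlinarith
  have hφc : Continuous φ := by rw [funext hφ]; fun_prop
  obtain ⟨r₂, hr₂, hφ_pos⟩ :=
    exists_isLeast_zero_of_continuousOn zero_le_one hφc.continuousOn hφ₀ hφ₁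
  refine ⟨hφ₀, hφ₁, r₂, hr₂, fun f hf hf₀ hf₁ hf₂ hU z hz => ?_⟩
  have hφz := hφ_pos ‖z‖ ⟨norm_nonneg z, hz.trans_le (min_le_right _ _)⟩
  rw [hφ] at hφz
  have hz₂ := lt_half_of_cubic_pos hA₁ hA₂ hlam₀.le (norm_nonneg z) hφz
  exact re_Tfun_pos hA₁ (by linarith)
    (norm_mul_deriv_deriv_div_deriv_le hlam₀ hlam₁ hf.differentiableOn hf₀ hf₁ hf₂ hU hz₂.le)
    (six_mul_div_lt_of_cubic_pos (by nlinarith [norm_nonneg z]) (norm_nonneg z) hφz)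

/-- Lower bound for the radius of concavity of the class `𝒰₀(λ)`. -/
theorem radius_of_concavity_U0
    (A : ℝ) (hA : A ∈ Set.Ioc (1 : ℝ) 2) (lam : ℝ) (hlam : lam ∈ Set.Ioc (0 : ℝ) 1)
    (r₁ : ℝ)
    (hr₁ : r₁ = Real.sqrt ((5 + lam - Real.sqrt ((1 - lam) * (25 - lam))) / (6 * lam)))
    (φ : ℝ → ℝ)
    (hφ : ∀ r : ℝ, φ r =
      -lam * (9 - A) * r ^ 3 - lam * (A + 11) * r ^ 2 - (A + 3) * r + A - 1) :
    0 < φ 0 ∧ φ 1 < 0 ∧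
    ∃ r₂ : ℝ, IsLeast {r : ℝ | r ∈ Set.Ioo (0 : ℝ) 1 ∧ φ r = 0} r₂ ∧
      ∀ f : ℂ → ℂ, AnalyticOn ℂ f (ball (0 : ℂ) 1) →
        f 0 = 0 → deriv f 0 = 1 → deriv (deriv f) 0 = 0 →
        (∀ z ∈ ball (0 : ℂ) 1, z ≠ 0 →
          ‖(z / f z) ^ 2 * deriv f z - 1‖ < lam) →
        ∀ z : ℂ, ‖z‖ < min r₁ r₂ → 0 < (Tfun A f z).re :=
  radius_of_concavity_U0_general A hA lam hlam r₁ φ hφ
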